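/- For every real number x ≥ 0, S(x) = 2·(S(x/p) + S(x/q) − S(x/(pq))) + 1 − W*(⌊x⌋). -/

import Mathlib

/-- A strictly chained `(p,q)`-ary partition of `U`: a finite strictly decreasing
list of positive integers of the form `p^a * q^b`, each part divisible by the next,
summing to `U`. -/
def IsSCPartition (p q U : ℕ) (l : List ℕ) : Prop :=
  (∀ x ∈ l, ∃ a b : ℕ, x = p ^ a * q ^ b) ∧
  List.Chain' (fun x y => y ∣ x ∧ y < x) l ∧
  l.sum = U

/-- The set of strictly chained `(p,q)`-ary partitions of `U`. -/
def Omega (p q U : ℕ) : Set (List ℕ) := {l | IsSCPartition p q U l}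

/-- The subset of `Omega p q U` of partitions with no part equal to `1`. -/
def OmegaStar (p q U : ℕ) : Set (List ℕ) := {l | IsSCPartition p q U l ∧ 1 ∉ l}

/-- `W p q U` is the number of strictly chained `(p,q)`-ary partitions of `U`. -/
noncomputable def W (p q U : ℕ) : ℕ := (Omega p q U).ncard

/-- `Wstar p q U` is the number of strictly chained `(p,q)`-ary partitions of `U`
with no part equal to `1`. -/
noncomputable def Wstar (p q U : ℕ) : ℕ := (OmegaStar p q U).ncard

/-- `S p q x = Σ_{U=1}^{⌊x⌋} W p q U`. -/
noncomputable def S (p q : ℕ) (x : ℝ) : ℕ := ∑ U ∈ Finset.Icc 1 ⌊x⌋₊, W p q U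

/-!
Every partition containing the part `1` ends with it, and deleting it is a bijection onto the
partitions of `U` without part `1`; hence `W (U + 1) = W* (U + 1) + W* U`, and summing gives
`S x + W* ⌊x⌋ = 2 ∑_{1 ≤ U ≤ x} W* U + 1`.

In a partition without part `1` the smallest part `p^a q^b ≠ 1` divides all the others, so either
every part is divisible by `p` or every part is divisible by `q`. The partitions of `U` whose parts
are all divisible by `m = p^α q^β` are exactly `m` times the partitions of `U / m` (by coprimality
the quotients are again of the form `p^a q^b`), so inclusion–exclusion over `p`, `q`, `p q` gives
`∑_{1 ≤ U ≤ x} W* U + S (x / pq) = S (x / p) + S (x / q)`.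
-/

theorem Finset.sum_Icc_eq_sum_Icc_div {M : Type*} [AddCommMonoid M] {f : ℕ → M} {m : ℕ}
    (hm : 0 < m) (hf : ∀ U, ¬ m ∣ U → f U = 0) (n : ℕ) :
    ∑ U ∈ Icc 1 n, f U = ∑ V ∈ Icc 1 (n / m), f (m * V) := by
  have hmem : ∀ V, m * V ∈ Icc 1 n ↔ V ∈ Icc 1 (n / m) := fun V => by
    simp only [mem_Icc, Nat.le_div_iff_mul_le hm, mul_comm V, Nat.one_le_iff_ne_zero,
      mul_ne_zero_iff, hm.ne', ne_eq, not_false_eq_true, true_and]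
  rw [← sum_image fun _ _ _ _ h => Nat.eq_of_mul_eq_mul_left hm h]
  refine (sum_subset (fun U hU => ?_) fun U _ hU => hf U ?_).symm
  · obtain ⟨V, hV, rfl⟩ := mem_image.mp hU
    exact (hmem V).mpr hV
  · rintro ⟨V, rfl⟩
    exact hU (mem_image_of_mem _ ((hmem V).mp ‹_›))

-- Restates `IsSCPartition` with `List.IsChain` in place of the deprecated `List.Chain'`.
theorem isSCPartition_iff {p q U : ℕ} {l : List ℕ} :
    IsSCPartition p q U l ↔ (∀ x ∈ l, ∃ a b : ℕ, x = p ^ a * q ^ b) ∧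
      l.IsChain (fun x y => y ∣ x ∧ y < x) ∧ l.sum = U :=
  Iff.rfl

namespace IsSCPartition

variable {p q U : ℕ} {l : List ℕ}

theorem pairwise (hl : IsSCPartition p q U l) : l.Pairwise (fun x y => y ∣ x ∧ y < x) :=
  haveI : Trans (fun x y : ℕ => y ∣ x ∧ y < x) (fun x y => y ∣ x ∧ y < x)
      (fun x y => y ∣ x ∧ y < x) :=
    ⟨fun hab hbc => ⟨hbc.1.trans hab.1, hbc.2.trans hab.2⟩⟩
  hl.2.1.pairwise

theorem le_of_mem (hl : IsSCPartition p q U l) {x : ℕ} (hx : x ∈ l) : x ≤ U :=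
  hl.2.2 ▸ List.le_sum_of_mem hx

theorem pos_of_mem (hp : 0 < p) (hq : 0 < q) (hl : IsSCPartition p q U l) {x : ℕ}
    (hx : x ∈ l) : 0 < x := by
  obtain ⟨a, b, rfl⟩ := hl.1 x hx
  positivity

theorem sublist_reverse_range (hl : IsSCPartition p q U l) :
    l.Sublist (List.range (U + 1)).reverse := by
  have hgt : l.Pairwise (· > ·) := hl.pairwise.imp And.right
  refine List.sublist_of_subperm_of_pairwise (r := (· > ·))
    (List.subperm_of_subset hgt.nodup fun x hx => ?_) hgt ?_
  · simpa [Nat.lt_succ_iff] using hl.le_of_mem hx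
  · simpa [List.pairwise_reverse] using List.pairwise_lt_range

theorem eq_nil_of_sum_eq_zero (hp : 0 < p) (hq : 0 < q) (hl : IsSCPartition p q 0 l) :
    l = [] :=
  List.eq_nil_iff_forall_not_mem.mpr fun x hx =>
    (hl.pos_of_mem hp hq hx).ne' (List.sum_eq_zero_iff.mp hl.2.2 x hx)

theorem exists_eq_append_one (hl : IsSCPartition p q U l) (h1 : 1 ∈ l) :
    ∃ L, l = L ++ [1] ∧ 1 ∉ L := by
  rcases l.eq_nil_or_concat' with rfl | ⟨L, m, rfl⟩
  · simp at h1
  have hlast : ∀ x ∈ L, m ∣ x ∧ m < x := by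
    simpa using (List.pairwise_append.mp hl.pairwise).2.2
  have h1L : 1 ∉ L := fun h => by
    obtain ⟨hdvd, hlt⟩ := hlast 1 h
    obtain rfl : m = 0 := by omega
    simp at hdvd
  obtain rfl : m = 1 := by simpa [h1L, eq_comm] using h1
  exact ⟨L, rfl, h1L⟩

theorem append_one_iff (hp : 0 < p) (hq : 0 < q) {L : List ℕ} (h1 : 1 ∉ L) :
    IsSCPartition p q (U + 1) (L ++ [1]) ↔ IsSCPartition p q U L := by
  have hgt : ∀ x ∈ L, (∃ a b : ℕ, x = p ^ a * q ^ b) → 1 ∣ x ∧ 1 < x := by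
    rintro x hx ⟨a, b, rfl⟩
    have : p ^ a * q ^ b ≠ 1 := fun h => h1 (h ▸ hx)
    have : 0 < p ^ a * q ^ b := by positivity
    exact ⟨one_dvd _, by omega⟩
  simp only [isSCPartition_iff, List.forall_mem_append, List.forall_mem_singleton,
    List.isChain_append, List.sum_append, List.sum_singleton, Nat.add_right_cancel_iff]
  refine ⟨fun ⟨⟨hf, _⟩, ⟨hc, _⟩, hs⟩ => ⟨hf, hc, hs⟩, fun ⟨hf, hc, hs⟩ => ?_⟩
  refine ⟨⟨hf, 0, 0, by simp⟩, ⟨hc, List.isChain_singleton 1, ?_⟩, hs⟩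
  rintro x hx _ ⟨⟩
  have hxL := List.mem_of_mem_getLast? hx
  exact hgt x hxL (hf x hxL)

theorem forall_dvd_or_forall_dvd (hl : IsSCPartition p q U l) (h1 : 1 ∉ l) :
    (∀ x ∈ l, p ∣ x) ∨ (∀ x ∈ l, q ∣ x) := by
  rcases l.eq_nil_or_concat' with rfl | ⟨L, m, rfl⟩
  · simp
  have hm_dvd : ∀ x ∈ L ++ [m], m ∣ x := by
    simp only [List.mem_append, List.mem_singleton]
    rintro x (hx | rfl)
    exacts [((List.pairwise_append.mp hl.pairwise).2.2 x hx m (List.mem_singleton_self m)).1,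
      dvd_rfl]
  obtain ⟨a, b, hm⟩ := hl.1 m (by simp)
  have hab : a ≠ 0 ∨ b ≠ 0 := by
    by_contra! h
    simp [h, hm] at h1
  rcases hab with ha | hb
  · exact .inl fun x hx => (hm ▸ (dvd_pow_self p ha).mul_right _).trans (hm_dvd x hx)
  · exact .inr fun x hx => (hm ▸ (dvd_pow_self q hb).mul_left _).trans (hm_dvd x hx)

end IsSCPartition

theorem finite_Omega (p q U : ℕ) : (Omega p q U).Finite :=
  (List.range (U + 1)).reverse.sublists.toFinset.finite_toSet.subset fun _ hl => by
    simpa using IsSCPartition.sublist_reverse_range hl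

theorem finite_OmegaStar (p q U : ℕ) : (OmegaStar p q U).Finite :=
  (finite_Omega p q U).subset fun _ hl => hl.1

theorem Wstar_zero {p q : ℕ} (hp : 0 < p) (hq : 0 < q) : Wstar p q 0 = 1 := by
  have : OmegaStar p q 0 = {[]} := by
    ext l
    refine ⟨fun hl => hl.1.eq_nil_of_sum_eq_zero hp hq, ?_⟩
    rintro rfl
    exact ⟨⟨by simp, List.isChain_nil, rfl⟩, by simp⟩
  rw [Wstar, this, Set.ncard_singleton]

theorem W_succ {p q : ℕ} (hp : 0 < p) (hq : 0 < q) (U : ℕ) :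
    W p q (U + 1) = Wstar p q (U + 1) + Wstar p q U := by
  have hsplit : Omega p q (U + 1) = OmegaStar p q (U + 1) ∪ (· ++ [1]) '' OmegaStar p q U := by
    ext l
    refine ⟨fun hl => ?_, ?_⟩
    · by_cases h1 : 1 ∈ l
      · obtain ⟨L, rfl, h1L⟩ := IsSCPartition.exists_eq_append_one hl h1
        exact Or.inr ⟨L, ⟨(IsSCPartition.append_one_iff hp hq h1L).mp hl, h1L⟩, rfl⟩
      · exact Or.inl ⟨hl, h1⟩
    · rintro (⟨hl, -⟩ | ⟨L, ⟨hL, h1L⟩, rfl⟩)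
      · exact hl
      · exact (IsSCPartition.append_one_iff hp hq h1L).mpr hL
  have hdisj : Disjoint (OmegaStar p q (U + 1)) ((· ++ [1]) '' OmegaStar p q U) :=
    Set.disjoint_left.mpr fun _ hl ⟨_, _, hL⟩ => hl.2 (hL ▸ by simp)
  rw [W, hsplit, Set.ncard_union_eq hdisj (finite_OmegaStar p q _)
    ((finite_OmegaStar p q _).image _),
    Set.ncard_image_of_injective _ (List.append_left_injective [1])]
  rfl

theorem sum_W_add_Wstar {p q : ℕ} (hp : 0 < p) (hq : 0 < q) (n : ℕ) :
    ∑ U ∈ Finset.Icc 1 n, W p q U + Wstar p q n = 2 * ∑ U ∈ Finset.Icc 1 n, Wstar p q U + 1 := by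
  induction n with
  | zero => simp [Wstar_zero hp hq]
  | succ n ih =>
    rw [Finset.sum_Icc_succ_top (by omega), Finset.sum_Icc_succ_top (by omega), W_succ hp hq]
    omega

def OmegaDvd (p q m U : ℕ) : Set (List ℕ) := {l ∈ Omega p q U | ∀ x ∈ l, m ∣ x}

theorem finite_OmegaDvd (p q m U : ℕ) : (OmegaDvd p q m U).Finite :=
  (finite_Omega p q U).subset fun _ hl => hl.1

theorem OmegaDvd_eq_empty_of_not_dvd {p q m U : ℕ} (h : ¬ m ∣ U) : OmegaDvd p q m U = ∅ :=
  Set.eq_empty_of_forall_notMem fun _ ⟨hl, hdvd⟩ => h (hl.2.2 ▸ List.dvd_sum hdvd)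

theorem OmegaStar_eq_union {p q : ℕ} (hp : 1 < p) (hq : 1 < q) (U : ℕ) :
    OmegaStar p q U = OmegaDvd p q p U ∪ OmegaDvd p q q U := by
  ext l
  refine ⟨fun ⟨hl, h1⟩ => ?_, ?_⟩
  · rcases hl.forall_dvd_or_forall_dvd h1 with h | h
    exacts [.inl ⟨hl, h⟩, .inr ⟨hl, h⟩]
  · rintro (⟨hl, hdvd⟩ | ⟨hl, hdvd⟩) <;> refine ⟨hl, fun h1 => ?_⟩
    · exact hp.ne' (Nat.dvd_one.mp (hdvd 1 h1))
    · exact hq.ne' (Nat.dvd_one.mp (hdvd 1 h1))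

theorem OmegaDvd_inter {p q : ℕ} (hpq : p.Coprime q) (U : ℕ) :
    OmegaDvd p q p U ∩ OmegaDvd p q q U = OmegaDvd p q (p * q) U := by
  ext l
  refine ⟨fun ⟨⟨hl, hp⟩, _, hq⟩ => ⟨hl, fun x hx => hpq.mul_dvd_of_dvd_of_dvd (hp x hx) (hq x hx)⟩,
    fun ⟨hl, h⟩ => ⟨⟨hl, fun x hx => ?_⟩, hl, fun x hx => ?_⟩⟩
  exacts [(dvd_mul_right p q).trans (h x hx), (dvd_mul_left q p).trans (h x hx)]

theorem Wstar_add_ncard_OmegaDvd_mul {p q : ℕ} (hp : 1 < p) (hq : 1 < q) (hpq : p.Coprime q)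
    (U : ℕ) : Wstar p q U + (OmegaDvd p q (p * q) U).ncard =
      (OmegaDvd p q p U).ncard + (OmegaDvd p q q U).ncard := by
  rw [Wstar, OmegaStar_eq_union hp hq, ← OmegaDvd_inter hpq]
  exact Set.ncard_union_add_ncard_inter _ _ (finite_OmegaDvd p q p U) (finite_OmegaDvd p q q U)

theorem pow_mul_pow_eq_mul_of_dvd {p q : ℕ} (hp : 1 < p) (hq : 1 < q) (hpq : p.Coprime q)
    {α β a b : ℕ} (h : p ^ α * q ^ β ∣ p ^ a * q ^ b) :
    p ^ a * q ^ b = p ^ α * q ^ β * (p ^ (a - α) * q ^ (b - β)) := by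
  have ha : α ≤ a := (Nat.pow_dvd_pow_iff_le_right hp).mp
    ((hpq.pow α b).dvd_of_dvd_mul_right ((dvd_mul_right _ _).trans h))
  have hb : β ≤ b := (Nat.pow_dvd_pow_iff_le_right hq).mp
    ((hpq.symm.pow β a).dvd_of_dvd_mul_left ((dvd_mul_left _ _).trans h))
  rw [mul_mul_mul_comm, ← pow_add, ← pow_add, Nat.add_sub_cancel' ha, Nat.add_sub_cancel' hb]

section Scaling

variable {p q m : ℕ}

theorem exists_pow_mul_pow_mul_iff (hp : 1 < p) (hq : 1 < q) (hpq : p.Coprime q)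
    (hm : ∃ α β : ℕ, m = p ^ α * q ^ β) {y : ℕ} :
    (∃ a b : ℕ, m * y = p ^ a * q ^ b) ↔ ∃ a b : ℕ, y = p ^ a * q ^ b := by
  obtain ⟨α, β, rfl⟩ := hm
  refine ⟨fun ⟨a, b, h⟩ => ⟨a - α, b - β, ?_⟩, fun ⟨a, b, h⟩ => ⟨α + a, β + b, by rw [h]; ring⟩⟩
  have hdvd : p ^ α * q ^ β ∣ p ^ a * q ^ b := h ▸ dvd_mul_right _ y
  rw [pow_mul_pow_eq_mul_of_dvd hp hq hpq hdvd] at h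
  exact Nat.eq_of_mul_eq_mul_left (by positivity) h

theorem isSCPartition_map_mul_iff (hp : 1 < p) (hq : 1 < q) (hpq : p.Coprime q)
    (hm : ∃ α β : ℕ, m = p ^ α * q ^ β) {V : ℕ} {L : List ℕ} :
    IsSCPartition p q (m * V) (L.map (m * ·)) ↔ IsSCPartition p q V L := by
  have hm0 : 0 < m := by obtain ⟨α, β, rfl⟩ := hm; positivity
  have hsum : (L.map (m * ·)).sum = m * L.sum := by simpa using List.sum_map_mul_left L id m
  simp only [isSCPartition_iff, List.forall_mem_map, List.isChain_map, hsum,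
    Nat.mul_dvd_mul_iff_left hm0, Nat.mul_lt_mul_left hm0, Nat.mul_left_cancel_iff hm0,
    exists_pow_mul_pow_mul_iff hp hq hpq hm]

theorem image_map_mul_Omega (hp : 1 < p) (hq : 1 < q) (hpq : p.Coprime q)
    (hm : ∃ α β : ℕ, m = p ^ α * q ^ β) (V : ℕ) :
    List.map (m * ·) '' Omega p q V = OmegaDvd p q m (m * V) := by
  ext l
  refine ⟨?_, fun ⟨hl, hdvd⟩ => ?_⟩
  · rintro ⟨L, hL, rfl⟩
    exact ⟨(isSCPartition_map_mul_iff hp hq hpq hm).mpr hL, by simp⟩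
  · have hl_eq : (l.map (· / m)).map (m * ·) = l := by
      rw [List.map_map]
      conv_rhs => rw [← List.map_id l]
      exact List.map_congr_left fun x hx => Nat.mul_div_cancel' (hdvd x hx)
    refine ⟨l.map (· / m), (isSCPartition_map_mul_iff hp hq hpq hm).mp ?_, hl_eq⟩
    rwa [hl_eq]

theorem ncard_OmegaDvd_mul (hp : 1 < p) (hq : 1 < q) (hpq : p.Coprime q)
    (hm : ∃ α β : ℕ, m = p ^ α * q ^ β) (V : ℕ) :
    (OmegaDvd p q m (m * V)).ncard = W p q V := by
  have hm0 : 0 < m := by obtain ⟨α, β, rfl⟩ := hm; positivity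
  rw [← image_map_mul_Omega hp hq hpq hm, Set.ncard_image_of_injective _
    (List.map_injective_iff.mpr (mul_right_injective₀ hm0.ne'))]
  rfl

end Scaling

theorem sum_ncard_OmegaDvd {p q m : ℕ} (hp : 1 < p) (hq : 1 < q) (hpq : p.Coprime q)
    (hm : ∃ α β : ℕ, m = p ^ α * q ^ β) (n : ℕ) :
    ∑ U ∈ Finset.Icc 1 n, (OmegaDvd p q m U).ncard = ∑ V ∈ Finset.Icc 1 (n / m), W p q V := by
  have hm0 : 0 < m := by obtain ⟨α, β, rfl⟩ := hm; positivity
  rw [Finset.sum_Icc_eq_sum_Icc_div hm0 fun U hU => by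
    rw [OmegaDvd_eq_empty_of_not_dvd hU, Set.ncard_empty]]
  exact Finset.sum_congr rfl fun V _ => ncard_OmegaDvd_mul hp hq hpq hm V

theorem sum_Wstar_add_sum_W {p q : ℕ} (hp : 1 < p) (hq : 1 < q) (hpq : p.Coprime q) (n : ℕ) :
    ∑ U ∈ Finset.Icc 1 n, Wstar p q U + ∑ V ∈ Finset.Icc 1 (n / (p * q)), W p q V =
      ∑ V ∈ Finset.Icc 1 (n / p), W p q V + ∑ V ∈ Finset.Icc 1 (n / q), W p q V := by
  rw [← sum_ncard_OmegaDvd hp hq hpq ⟨1, 1, by ring⟩,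
    ← sum_ncard_OmegaDvd hp hq hpq ⟨1, 0, by ring⟩, ← sum_ncard_OmegaDvd hp hq hpq ⟨0, 1, by ring⟩,
    ← Finset.sum_add_distrib, ← Finset.sum_add_distrib]
  exact Finset.sum_congr rfl fun U _ => Wstar_add_ncard_OmegaDvd_mul hp hq hpq U

theorem S_recursion_general (p q : ℕ) (hp : 1 < p) (hq : 1 < q) (hpq : Nat.Coprime p q)
    (x : ℝ) :
    (S p q x : ℤ) =
      2 * ((S p q (x / p) : ℤ) + (S p q (x / q) : ℤ) - (S p q (x / (p * q)) : ℤ))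
        + 1 - (Wstar p q ⌊x⌋₊ : ℤ) := by
  have hS : ∀ m : ℕ, S p q (x / m) = ∑ U ∈ Finset.Icc 1 (⌊x⌋₊ / m), W p q U := fun m => by
    rw [S, Nat.floor_div_natCast]
  have h1 := sum_W_add_Wstar (p := p) (q := q) (by omega) (by omega) ⌊x⌋₊
  have h2 := sum_Wstar_add_sum_W hp hq hpq ⌊x⌋₊
  rw [← Nat.cast_mul, hS, hS, hS, S]
  omega

theorem S_recursion (p q : ℕ) (hp : 1 < p) (hq : 1 < q) (hpq : Nat.Coprime p q)
    (x : ℝ) (hx : 0 ≤ x) :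
    (S p q x : ℤ) =
      2 * ((S p q (x / p) : ℤ) + (S p q (x / q) : ℤ) - (S p q (x / (p * q)) : ℤ))
        + 1 - (Wstar p q ⌊x⌋₊ : ℤ) :=
  S_recursion_general p q hp hq hpq x
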